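/- Let E be a finite-dimensional real normed vector space, U ⊆ E open, J an almost complex structure on U, and Γ the Christoffel symbols of an almost complex linear connection on U (∇J = 0). Then the totally J-antilinear component of its torsion equals one quarter of the Nijenhuis tensor: T^{--}(x)(u,v) = (1/4)·N_J(u,v)(x) for all x ∈ U and u, v ∈ E, where the component is taken with respect to the complex structure J(x). -/

import Mathlib

/-- The Lie bracket of two vector fields on a normed space. -/
noncomputable def lieB {G : Type*} [NormedAddCommGroup G] [NormedSpace ℝ G]
    (X Y : G → G) : G → G :=
  fun p => fderiv ℝ Y p (X p) - fderiv ℝ X p (Y p)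

/-- The Nijenhuis tensor `N_J(X,Y) = [JX,JY] - J[JX,Y] - J[X,JY] - [X,Y]`. -/
noncomputable def nijenhuis {G : Type*} [NormedAddCommGroup G] [NormedSpace ℝ G]
    (J : G → G →L[ℝ] G) (X Y : G → G) : G → G :=
  fun p =>
    lieB (fun q => J q (X q)) (fun q => J q (Y q)) p
      - J p (lieB (fun q => J q (X q)) Y p)
      - J p (lieB X (fun q => J q (Y q)) p)
      - lieB X Y p

/-- The `(ε₁,ε₂)`-component of a bilinear map `S` with respect to a linear complex
structure `j`:
`S^{ε₁ε₂}(u,v) = (1/4)(S(u,v) - ε₁·j·S(ju,v) - ε₂·j·S(u,jv) - ε₁ε₂·S(ju,jv))`. -/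
noncomputable def signComp {E : Type*} [NormedAddCommGroup E] [NormedSpace ℝ E]
    (j : E →L[ℝ] E) (S : E → E → E) (ε₁ ε₂ : ℝ) : E → E → E :=
  fun u v =>
    (1/4 : ℝ) • (S u v - ε₁ • j (S (j u) v) - ε₂ • j (S u (j v)) - (ε₁ * ε₂) • S (j u) (j v))

/-!
For constant fields `u, v` the brackets in `N_J(u, v)` only involve `DJ`, and `∇J = 0` says
`DJ(a) b = J Γ(a, b) - Γ(a, J b)`. Substituting, the `Γ`-terms pair up into torsion terms:
`N_J(u, v) = T(u, v) + J T(J u, v) + J T(u, J v) - T(J u, J v) = 4 T^{--}(u, v)`.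
-/

theorem fderiv_clm_apply_const {G : Type*} [NormedAddCommGroup G] [NormedSpace ℝ G]
    {J : G → G →L[ℝ] G} {x : G} (hJ : DifferentiableAt ℝ J x) (a : G) :
    fderiv ℝ (fun q => J q a) x = (fderiv ℝ J x).flip a := by
  simpa using fderiv_clm_apply hJ (differentiableAt_const a)

theorem nijenhuis_const_apply {G : Type*} [NormedAddCommGroup G] [NormedSpace ℝ G]
    {J : G → G →L[ℝ] G} {x : G} (hJ : DifferentiableAt ℝ J x) (u v : G) :
    nijenhuis J (fun _ => u) (fun _ => v) x =
      fderiv ℝ J x (J x u) v - fderiv ℝ J x (J x v) u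
        + J x (fderiv ℝ J x v u) - J x (fderiv ℝ J x u v) := by
  simp only [nijenhuis, lieB, fderiv_fun_const, Pi.zero_apply, zero_apply, zero_sub, sub_zero,
    map_neg, fderiv_clm_apply_const hJ, ContinuousLinearMap.flip_apply]
  abel

theorem signComp_torsion_neg_neg {E : Type*} [NormedAddCommGroup E] [NormedSpace ℝ E]
    {j : E →L[ℝ] E} (hj : ∀ w, j (j w) = -w) {Γ D : E →L[ℝ] E →L[ℝ] E}
    (hD : ∀ a b, D a b + Γ a (j b) - j (Γ a b) = 0) (u v : E) :
    signComp j (fun a b => Γ a b - Γ b a) (-1) (-1) u v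
      = (1/4 : ℝ) • (D (j u) v - D (j v) u + j (D v u) - j (D u v)) := by
  have hD' : ∀ a b, D a b = j (Γ a b) - Γ a (j b) := fun a b => by
    linear_combination (norm := module) hD a b
  simp only [signComp, hD', map_sub, hj]
  module

theorem torsion_antilinear_part_eq_quarter_nijenhuis_general
    {E : Type*} [NormedAddCommGroup E] [NormedSpace ℝ E]
    (U : Set E) (hU : IsOpen U)
    (J : E → E →L[ℝ] E)
    (hJs : ContDiffOn ℝ (⊤ : ℕ∞) J U)
    (hJ2 : ∀ x ∈ U, (J x).comp (J x) = -ContinuousLinearMap.id ℝ E)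
    (Γ : E → E →L[ℝ] E →L[ℝ] E)
    (hac : ∀ x ∈ U, ∀ u v : E,
      fderiv ℝ J x u v + Γ x u (J x v) - J x (Γ x u v) = 0) :
    ∀ x ∈ U, ∀ u v : E,
      signComp (J x) (fun a b => Γ x a b - Γ x b a) (-1) (-1) u v
        = (1/4 : ℝ) • nijenhuis J (fun _ => u) (fun _ => v) x := by
  intro x hx u v
  have hJd : DifferentiableAt ℝ J x :=
    (hJs.contDiffAt (hU.mem_nhds hx)).differentiableAt (by simp)
  have hJJ : ∀ w, J x (J x w) = -w := fun w => by
    simpa using congrArg (fun f => f w) (hJ2 x hx)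
  rw [nijenhuis_const_apply hJd]
  exact signComp_torsion_neg_neg hJJ (hac x hx) u v

/-- First part of Theorem A.1 of the paper: for any almost complex connection `∇`
(Christoffel symbols `Γ`, `∇J = 0`), the totally `J`-antilinear part of its torsion
equals one quarter of the Nijenhuis tensor: `T^{--} = (1/4)·N_J`. -/
theorem torsion_antilinear_part_eq_quarter_nijenhuis
    {E : Type*} [NormedAddCommGroup E] [NormedSpace ℝ E] [FiniteDimensional ℝ E]
    (U : Set E) (hU : IsOpen U)
    (J : E → E →L[ℝ] E)
    (hJs : ContDiffOn ℝ (⊤ : ℕ∞) J U)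
    (hJ2 : ∀ x ∈ U, (J x).comp (J x) = -ContinuousLinearMap.id ℝ E)
    (Γ : E → E →L[ℝ] E →L[ℝ] E)
    (hΓs : ContDiffOn ℝ (⊤ : ℕ∞) Γ U)
    (hac : ∀ x ∈ U, ∀ u v : E,
      fderiv ℝ J x u v + Γ x u (J x v) - J x (Γ x u v) = 0) :
    ∀ x ∈ U, ∀ u v : E,
      signComp (J x) (fun a b => Γ x a b - Γ x b a) (-1) (-1) u v
        = (1/4 : ℝ) • nijenhuis J (fun _ => u) (fun _ => v) x :=
  torsion_antilinear_part_eq_quarter_nijenhuis_general U hU J hJs hJ2 Γ hac
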